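/- arXiv:1207.4529 — 3 statements merged into one kernel-verified Lean document; each statement's English description precedes it below -/
import Mathlib

section
/- Let p be analytic on the open unit disk with p(0) = 1 and Re p(z) > 1/2 for all z in the unit disk. Then for |z| = r one has Re(z p'(z)/p(z)) ≥ −r/(1+r) whenever r < 1/3, and Re(z p'(z)/p(z)) ≥ −(√2 − √(1−r²))²/(1−r²) whenever 1/3 ≤ r ≤ √(8√2 − 11). -/
/-!
Since `Re p > 1/2`, the function `ω = 1/p - 1` maps the disk into itself and vanishes at `0`,
so `ω(w) = w g(w)` with `|g| ≤ 1` by Schwarz's lemma, and `p = 1/(1 + w g(w))`. With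
`W = z g(z)`, `t = |W| ≤ r` one gets `z p'/p = -(W + z² g'(z))/(1 + W)`, and the Schwarz–Pick
inequality for `g` gives `|z² g'(z)| ≤ ρ := (r² - t²)/(1 - r²)`. Writing `s = |1 + W|`,
`Re (W/(1 + W)) + ρ/s` is a concave quadratic in `1/s` whose maximum over `s ∈ [1 - t, 1 + t]`
is attained at `s = 1 + t` as soon as `ρ ≤ 1 - t`, which holds for every `t` when `r² ≤ 2/5`.
This gives `Re (z p'/p) ≥ -(t + ρ)/(1 + t)`; for `r < 1/3` the right side is smallest at
`t = r`, and in general it is at least `-(√2 - √(1 - r²))²/(1 - r²)`, its value at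
`t = √2 √(1 - r²) - 1`.
-/

open Metric Real Complex Set Filter Topology ComplexConjugate

noncomputable def diskAutomorphism (a w : ℂ) : ℂ := (w - a) / (1 - conj a * w)

lemma norm_one_sub_conj_mul_sq_sub_norm_sub_sq (a w : ℂ) :
    ‖1 - conj a * w‖ ^ 2 - ‖w - a‖ ^ 2 = (1 - ‖a‖ ^ 2) * (1 - ‖w‖ ^ 2) := by
  simp only [Complex.sq_norm, normSq_apply, sub_re, sub_im, one_re, one_im, mul_re, mul_im,
    conj_re, conj_im]
  ring

lemma one_sub_conj_mul_ne_zero {a w : ℂ} (ha : ‖a‖ < 1) (hw : ‖w‖ ≤ 1) :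
    1 - conj a * w ≠ 0 := by
  rw [sub_ne_zero]
  intro h
  have : ‖conj a * w‖ < 1 := by
    rw [norm_mul, RCLike.norm_conj]
    exact mul_lt_one_of_nonneg_of_lt_one_left (norm_nonneg a) ha hw
  rw [← h, norm_one] at this
  exact this.false

lemma norm_one_sub_conj_mul_self {a : ℂ} (ha : ‖a‖ ≤ 1) :
    ‖1 - conj a * a‖ = 1 - ‖a‖ ^ 2 := by
  rw [conj_mul', ← ofReal_pow, ← ofReal_one, ← ofReal_sub, norm_real, Real.norm_eq_abs,
    abs_of_nonneg (by nlinarith [norm_nonneg a])]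

lemma norm_diskAutomorphism_le_one {a w : ℂ} (ha : ‖a‖ < 1) (hw : ‖w‖ ≤ 1) :
    ‖diskAutomorphism a w‖ ≤ 1 := by
  have hden := norm_pos_iff.2 (one_sub_conj_mul_ne_zero ha hw)
  rw [diskAutomorphism, norm_div, div_le_one hden]
  refine le_of_sq_le_sq ?_ hden.le
  have : 0 ≤ (1 - ‖a‖ ^ 2) * (1 - ‖w‖ ^ 2) := mul_nonneg (by nlinarith [norm_nonneg a])
    (by nlinarith [norm_nonneg w])
  linarith [norm_one_sub_conj_mul_sq_sub_norm_sub_sq a w]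

lemma norm_diskAutomorphism_lt_one {a w : ℂ} (ha : ‖a‖ < 1) (hw : ‖w‖ < 1) :
    ‖diskAutomorphism a w‖ < 1 := by
  have hden := norm_pos_iff.2 (one_sub_conj_mul_ne_zero ha hw.le)
  rw [diskAutomorphism, norm_div, div_lt_one hden]
  refine lt_of_pow_lt_pow_left₀ 2 hden.le ?_
  have : 0 < (1 - ‖a‖ ^ 2) * (1 - ‖w‖ ^ 2) := mul_pos (by nlinarith [norm_nonneg a])
    (by nlinarith [norm_nonneg w])
  linarith [norm_one_sub_conj_mul_sq_sub_norm_sub_sq a w]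

lemma hasDerivAt_diskAutomorphism {a w : ℂ} (h : 1 - conj a * w ≠ 0) :
    HasDerivAt (diskAutomorphism a) ((1 - conj a * a) / (1 - conj a * w) ^ 2) w := by
  have hnum : HasDerivAt (fun w => w - a) 1 w := (hasDerivAt_id w).sub_const a
  have hden : HasDerivAt (fun w => 1 - conj a * w) (-conj a) w := by
    simpa using ((hasDerivAt_id w).const_mul (conj a)).const_sub 1
  refine (hnum.div hden h).congr_deriv ?_
  field_simp
  ring

lemma diskAutomorphism_self (a : ℂ) : diskAutomorphism a a = 0 := by
  simp [diskAutomorphism]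

lemma diskAutomorphism_neg_zero (a : ℂ) : diskAutomorphism (-a) 0 = a := by
  simp [diskAutomorphism]

lemma mapsTo_diskAutomorphism_ball {a : ℂ} (ha : ‖a‖ < 1) :
    MapsTo (diskAutomorphism a) (ball 0 1) (ball 0 1) := fun _ hw =>
  mem_ball_zero_iff.2 (norm_diskAutomorphism_lt_one ha (mem_ball_zero_iff.1 hw))

lemma norm_deriv_mul_le_of_norm_lt_one {g : ℂ → ℂ}
    (hd : DifferentiableOn ℂ g (ball 0 1)) (hg : MapsTo g (ball 0 1) (closedBall 0 1))
    {z : ℂ} (hz : z ∈ ball (0 : ℂ) 1) (hgz : ‖g z‖ < 1) :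
    ‖deriv g z‖ * (1 - ‖z‖ ^ 2) ≤ 1 - ‖g z‖ ^ 2 := by
  have hz1 : ‖z‖ < 1 := mem_ball_zero_iff.1 hz
  have hnz : ‖-z‖ < 1 := by rwa [norm_neg]
  set a := g z
  set φ := diskAutomorphism (-z)
  have hφ0 : φ 0 = z := diskAutomorphism_neg_zero z
  set H := diskAutomorphism a ∘ g ∘ φ
  have hH0 : H 0 = 0 := by simp only [H, Function.comp_apply, hφ0, a, diskAutomorphism_self]
  have hHd : DifferentiableOn ℂ H (ball 0 1) := by
    intro w hw
    have hφw := mapsTo_diskAutomorphism_ball hnz hw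
    have hφ := hasDerivAt_diskAutomorphism
      (one_sub_conj_mul_ne_zero hnz (mem_ball_zero_iff.1 hw).le)
    have hψ := hasDerivAt_diskAutomorphism
      (one_sub_conj_mul_ne_zero hgz (mem_closedBall_zero_iff.1 (hg hφw)))
    exact (hψ.differentiableAt.comp w ((hd.differentiableAt (isOpen_ball.mem_nhds hφw)).comp w
      hφ.differentiableAt)).differentiableWithinAt
  have hmaps : MapsTo H (ball 0 1) (closedBall (H 0) 1) := fun w hw => by
    rw [hH0, mem_closedBall_zero_iff]
    exact norm_diskAutomorphism_le_one hgz
      (mem_closedBall_zero_iff.1 (hg (mapsTo_diskAutomorphism_ball hnz hw)))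
  have hH : HasDerivAt H ((1 - conj a * a) / (1 - conj a * a) ^ 2 *
      (deriv g z * ((1 - conj (-z) * (-z)) / (1 - conj (-z) * 0) ^ 2))) 0 := by
    have hg' : HasDerivAt g (deriv g z) (φ 0) :=
      hφ0 ▸ (hd.differentiableAt (isOpen_ball.mem_nhds hz)).hasDerivAt
    have hψ : HasDerivAt (diskAutomorphism a) ((1 - conj a * a) / (1 - conj a * a) ^ 2)
        ((g ∘ φ) 0) := by
      rw [Function.comp_apply, hφ0]
      exact hasDerivAt_diskAutomorphism (one_sub_conj_mul_ne_zero hgz hgz.le)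
    exact hψ.comp 0 (hg'.comp 0 (hasDerivAt_diskAutomorphism (by simp)))
  have hschwarz := norm_deriv_le_div_of_mapsTo_ball hHd hmaps one_pos
  rw [hH.deriv, map_neg, neg_mul_neg, mul_zero, sub_zero, one_pow, div_one, norm_mul, norm_mul,
    norm_div, norm_pow, norm_one_sub_conj_mul_self hgz.le, norm_one_sub_conj_mul_self hz1.le,
    pow_two (1 - ‖a‖ ^ 2), div_mul_cancel_left₀ (by nlinarith [norm_nonneg a]), div_one,
    inv_mul_le_iff₀ (by nlinarith [norm_nonneg a]), mul_one] at hschwarz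
  exact hschwarz

theorem norm_deriv_mul_le_of_mapsTo_closedBall {g : ℂ → ℂ}
    (hd : DifferentiableOn ℂ g (ball 0 1)) (hg : MapsTo g (ball 0 1) (closedBall 0 1))
    {z : ℂ} (hz : z ∈ ball (0 : ℂ) 1) :
    ‖deriv g z‖ * (1 - ‖z‖ ^ 2) ≤ 1 - ‖g z‖ ^ 2 := by
  rcases (mem_closedBall_zero_iff.1 (hg hz)).eq_or_lt with hmax | hlt
  · -- by the maximum modulus principle `g` is constant near `z`
    have hdiff : ∀ᶠ w in 𝓝 z, DifferentiableAt ℂ g w :=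
      eventually_of_mem (isOpen_ball.mem_nhds hz) fun w hw =>
        hd.differentiableAt (isOpen_ball.mem_nhds hw)
    have hloc : IsLocalMax (norm ∘ g) z := by
      filter_upwards [isOpen_ball.mem_nhds hz] with w hw
      simpa [hmax] using hg hw
    have hconst : g =ᶠ[𝓝 z] fun _ => g z := eventually_eq_of_isLocalMax_norm hdiff hloc
    rw [hconst.deriv_eq, deriv_const, hmax]
    simp
  · exact norm_deriv_mul_le_of_norm_lt_one hd hg hz hlt

lemma re_div_one_add (W : ℂ) :
    (W / (1 + W)).re = (‖1 + W‖ ^ 2 - 1 + ‖W‖ ^ 2) / ‖1 + W‖ ^ 2 / 2 := by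
  rw [div_re, Complex.sq_norm, Complex.sq_norm]
  simp only [normSq_apply, add_re, add_im, one_re, one_im]
  ring

lemma add_div_le_of_le_one_add {t s ρ : ℝ} (ht : t < 1) (hs0 : 0 < s) (hs : s ≤ 1 + t)
    (hρ : ρ ≤ 1 - t) :
    (s ^ 2 - 1 + t ^ 2) / s ^ 2 / 2 + ρ / s ≤ (t + ρ) / (1 + t) := by
  have ht' : 0 < 1 + t := by linarith
  have hdiff : (t + ρ) / (1 + t) - ((s ^ 2 - 1 + t ^ 2) / s ^ 2 / 2 + ρ / s) =
      (1 + t - s) * ((1 - t) * (1 + t + s) / 2 - ρ * s) / (s ^ 2 * (1 + t)) := by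
    field_simp
    ring
  have : ρ * s ≤ (1 - t) * (1 + t + s) / 2 := by nlinarith
  have : 0 ≤ (1 + t - s) * ((1 - t) * (1 + t + s) / 2 - ρ * s) / (s ^ 2 * (1 + t)) := by
    apply div_nonneg (mul_nonneg _ _) (mul_pos (pow_pos hs0 2) ht').le <;> linarith
  linarith

lemma norm_one_add_pos {W : ℂ} (hW : ‖W‖ < 1) : 0 < ‖1 + W‖ := by
  have := norm_sub_norm_le (1 : ℂ) (-W)
  simp only [norm_one, norm_neg, sub_neg_eq_add] at this
  linarith

lemma re_div_one_add_add_div_norm_le {W : ℂ} {ρ : ℝ} (hW : ‖W‖ < 1)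
    (hρ : ρ ≤ 1 - ‖W‖) :
    (W / (1 + W)).re + ρ / ‖1 + W‖ ≤ (‖W‖ + ρ) / (1 + ‖W‖) := by
  have hs : ‖1 + W‖ ≤ 1 + ‖W‖ := by simpa using norm_add_le 1 W
  rw [re_div_one_add]
  exact add_div_le_of_le_one_add hW (norm_one_add_pos hW) hs hρ

lemma mul_deriv_inv_one_add_mul_div {g : ℂ → ℂ} {z : ℂ} (hg : DifferentiableAt ℂ g z)
    (h : 1 + z * g z ≠ 0) :
    z * deriv (fun w => (1 + w * g w)⁻¹) z / (1 + z * g z)⁻¹ =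
      -((z * g z + z ^ 2 * deriv g z) / (1 + z * g z)) := by
  have hh : HasDerivAt (fun w => 1 + w * g w) (g z + z * deriv g z) z := by
    simpa using ((hasDerivAt_id z).mul hg.hasDerivAt).const_add 1
  have hinv : HasDerivAt (fun w => (1 + w * g w)⁻¹) _ z := hh.inv h
  rw [hinv.deriv]
  field_simp

noncomputable def logDerivBound (r t : ℝ) : ℝ := (t + (r ^ 2 - t ^ 2) / (1 - r ^ 2)) / (1 + t)

lemma sq_sub_sq_div_one_sub_sq_le {r t : ℝ} (hr : r ^ 2 ≤ 2 / 5) :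
    (r ^ 2 - t ^ 2) / (1 - r ^ 2) ≤ 1 - t := by
  rw [div_le_iff₀ (by linarith)]
  -- the quadratic `t² - (1 - r²) t + 1 - 2 r²` in `t` has discriminant `r⁴ + 6 r² - 3 < 0`
  nlinarith [sq_nonneg (t - (1 - r ^ 2) / 2), sq_nonneg r]

theorem exists_neg_logDerivBound_le_re {g : ℂ → ℂ} (hd : DifferentiableOn ℂ g (ball 0 1))
    (hg : MapsTo g (ball 0 1) (closedBall 0 1)) {z : ℂ} (hz : ‖z‖ ^ 2 ≤ 2 / 5) :
    ∃ t, 0 ≤ t ∧ t ≤ ‖z‖ ∧ -logDerivBound ‖z‖ t ≤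
      (z * deriv (fun w => (1 + w * g w)⁻¹) z / (1 + z * g z)⁻¹).re := by
  have hz1 : ‖z‖ < 1 := by nlinarith [norm_nonneg z]
  have hzb : z ∈ ball (0 : ℂ) 1 := mem_ball_zero_iff.2 hz1
  have hgz : ‖g z‖ ≤ 1 := mem_closedBall_zero_iff.1 (hg hzb)
  set r := ‖z‖
  set W := z * g z
  have ht : ‖W‖ = r * ‖g z‖ := norm_mul _ _
  have htr : ‖W‖ ≤ r := ht ▸ mul_le_of_le_one_right (norm_nonneg z) hgz
  have hW : ‖W‖ < 1 := htr.trans_lt hz1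
  have hB : ‖z ^ 2 * deriv g z‖ ≤ (r ^ 2 - ‖W‖ ^ 2) / (1 - r ^ 2) := by
    rw [le_div_iff₀ (by linarith), norm_mul, norm_pow, ht, mul_assoc]
    calc r ^ 2 * (‖deriv g z‖ * (1 - r ^ 2)) ≤ r ^ 2 * (1 - ‖g z‖ ^ 2) :=
          mul_le_mul_of_nonneg_left (norm_deriv_mul_le_of_mapsTo_closedBall hd hg hzb) (sq_nonneg r)
      _ = r ^ 2 - (r * ‖g z‖) ^ 2 := by ring
  refine ⟨‖W‖, norm_nonneg W, htr, ?_⟩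
  rw [mul_deriv_inv_one_add_mul_div (hd.differentiableAt (isOpen_ball.mem_nhds hzb))
    (norm_pos_iff.1 (norm_one_add_pos hW)), neg_re, logDerivBound, neg_le_neg_iff, add_div, add_re]
  calc (W / (1 + W)).re + (z ^ 2 * deriv g z / (1 + W)).re
      ≤ (W / (1 + W)).re + (r ^ 2 - ‖W‖ ^ 2) / (1 - r ^ 2) / ‖1 + W‖ := by
        gcongr
        calc _ ≤ ‖z ^ 2 * deriv g z / (1 + W)‖ := re_le_norm _
          _ = ‖z ^ 2 * deriv g z‖ / ‖1 + W‖ := norm_div _ _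
          _ ≤ _ := by gcongr
    _ ≤ _ := re_div_one_add_add_div_norm_le hW (sq_sub_sq_div_one_sub_sq_le hz)

lemma norm_inv_sub_one_lt_one {w : ℂ} (hw : 1 / 2 < w.re) : ‖w⁻¹ - 1‖ < 1 := by
  have hw0 : w ≠ 0 := by rintro rfl; norm_num at hw
  have hpos := norm_pos_iff.2 hw0
  rw [show w⁻¹ - 1 = (1 - w) / w by field_simp, norm_div, div_lt_one hpos]
  refine lt_of_pow_lt_pow_left₀ 2 hpos.le ?_
  rw [Complex.sq_norm, Complex.sq_norm, normSq_apply, normSq_apply]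
  simp only [sub_re, sub_im, one_re, one_im]
  nlinarith

theorem exists_neg_logDerivBound_le_re_of_half_lt_re {p : ℂ → ℂ}
    (hp : DifferentiableOn ℂ p (ball 0 1)) (hp0 : p 0 = 1)
    (hre : ∀ z ∈ ball (0 : ℂ) 1, 1 / 2 < (p z).re) {z : ℂ} (hz : ‖z‖ ^ 2 ≤ 2 / 5) :
    ∃ t, 0 ≤ t ∧ t ≤ ‖z‖ ∧ -logDerivBound ‖z‖ t ≤ (z * deriv p z / p z).re := by
  set ω := fun w => (p w)⁻¹ - 1
  have hpne : ∀ w ∈ ball (0 : ℂ) 1, p w ≠ 0 := fun w hw h => by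
    have := hre w hw
    rw [h] at this
    norm_num at this
  have hωd : DifferentiableOn ℂ ω (ball 0 1) := (hp.inv hpne).sub_const 1
  have hω : MapsTo ω (ball 0 1) (closedBall (ω 0) 1) := fun w hw => by
    simpa [ω, hp0] using (norm_inv_sub_one_lt_one (hre w hw)).le
  set g := dslope ω 0
  have hg : MapsTo g (ball 0 1) (closedBall 0 1) := fun w hw => by
    simpa using norm_dslope_le_div_of_mapsTo_ball hωd hω hw
  have hp_eq : p = fun w => (1 + w * g w)⁻¹ := by
    funext w
    have := sub_smul_dslope ω 0 w
    simp only [ω, hp0, sub_zero, smul_eq_mul, inv_one, sub_self] at this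
    rw [this, add_sub_cancel, inv_inv]
  rw [hp_eq]
  exact exists_neg_logDerivBound_le_re
    ((differentiableOn_dslope (ball_mem_nhds _ one_pos)).2 hωd) hg hz

lemma logDerivBound_le_of_lt_third {r t : ℝ} (ht0 : 0 ≤ t) (htr : t ≤ r) (hr : r < 1 / 3) :
    logDerivBound r t ≤ r / (1 + r) := by
  have hr2 : 0 < 1 - r ^ 2 := by nlinarith
  rw [logDerivBound, div_le_div_iff₀ (by linarith) (by linarith), add_div' _ _ _ hr2.ne',
    div_mul_eq_mul_div, div_le_iff₀ hr2]
  nlinarith [mul_nonneg (sub_nonneg.2 htr) (show (0 : ℝ) ≤ 1 - 2 * r - t by linarith),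
    mul_nonneg ht0 (sub_nonneg.2 htr)]

lemma logDerivBound_le {r t : ℝ} (ht0 : 0 ≤ t) (hr : r ^ 2 < 1) :
    logDerivBound r t ≤ (√2 - √(1 - r ^ 2)) ^ 2 / (1 - r ^ 2) := by
  have hr2 : 0 < 1 - r ^ 2 := by linarith
  have hq : √2 ^ 2 = 2 := Real.sq_sqrt zero_le_two
  have hb : √(1 - r ^ 2) ^ 2 = 1 - r ^ 2 := Real.sq_sqrt hr2.le
  rw [← sub_nonneg]
  have : (√2 - √(1 - r ^ 2)) ^ 2 / (1 - r ^ 2) - logDerivBound r t =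
      (1 + t - √2 * √(1 - r ^ 2)) ^ 2 / ((1 - r ^ 2) * (1 + t)) := by
    rw [logDerivBound]
    field_simp
    linear_combination (1 + t - √(1 - r ^ 2) ^ 2) * hq + (t - 1) * hb
  rw [this]
  positivity

lemma sq_le_two_fifths_of_le_sqrt {r : ℝ} (hr0 : 0 ≤ r) (hr : r ≤ √(8 * √2 - 11)) :
    r ^ 2 ≤ 2 / 5 := by
  have hq : √2 < 1.425 := (Real.sqrt_lt' (by norm_num)).2 (by norm_num)
  have := hr.trans (Real.sqrt_le_sqrt (show 8 * √2 - 11 ≤ 2 / 5 by linarith))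
  exact (Real.le_sqrt hr0 (by norm_num)).1 this

theorem half_plane_log_deriv_lower_bound
    (p : ℂ → ℂ) (hp : DifferentiableOn ℂ p (ball (0 : ℂ) 1))
    (hp0 : p 0 = 1) (hre : ∀ z ∈ ball (0 : ℂ) 1, 1 / 2 < (p z).re)
    (z : ℂ) (r : ℝ) (hz : ‖z‖ = r) :
    (r < 1 / 3 → (z * deriv p z / p z).re ≥ - r / (1 + r)) ∧
    (1 / 3 ≤ r → r ≤ Real.sqrt (8 * Real.sqrt 2 - 11) →
      (z * deriv p z / p z).re ≥
        - (Real.sqrt 2 - Real.sqrt (1 - r ^ 2)) ^ 2 / (1 - r ^ 2)) := by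
  have hr0 : 0 ≤ r := hz ▸ norm_nonneg z
  have key (hr : r ^ 2 ≤ 2 / 5) :
      ∃ t, 0 ≤ t ∧ t ≤ r ∧ -logDerivBound r t ≤ (z * deriv p z / p z).re :=
    hz ▸ exists_neg_logDerivBound_le_re_of_half_lt_re hp hp0 hre (hz ▸ hr)
  refine ⟨fun hr => ?_, fun _ hr => ?_⟩
  · obtain ⟨t, ht0, htr, h⟩ := key (by nlinarith)
    have := logDerivBound_le_of_lt_third ht0 htr hr
    rw [ge_iff_le, neg_div]
    linarith
  · have hr2 := sq_le_two_fifths_of_le_sqrt hr0 hr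
    obtain ⟨t, ht0, -, h⟩ := key hr2
    have := logDerivBound_le (r := r) ht0 (by linarith)
    rw [ge_iff_le, neg_div]
    linarith
end

section
/- Let f, g be analytic on the unit disk with f(0)=g(0)=0, f'(0)=g'(0)=1, f(z)/g(z) and g(z)/z having positive real part on the unit disk (and f, g nonvanishing on 𝔻∖{0}). Then for |z| = r < 1, |z f'(z)/f(z) − 1| ≤ 4r/(1−r²). -/
/-!
With `q = g / z` and `p = f / g` (removable singularities at `0`), `f = z · p · q`, so
`z f'/f - 1 = z p'/p + z q'/q`. Both `p` and `q` have positive real part on the disc, and for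
such an `h` the Schwarz–Pick lemma applied to the Cayley transform `(h - 1) / (h + 1)` gives
`|h'(z)| (1 - |z|²) ≤ 2 Re h(z) ≤ 2 |h(z)|`; each term is therefore at most `2r / (1 - r²)`.
-/

open Metric Set Complex ComplexConjugate Filter Topology

noncomputable def discMobius (a x : ℂ) : ℂ := (x + a) / (1 + conj a * x)

lemma sq_norm_one_add_conj_mul_sub_sq_norm_add (a x : ℂ) :
    ‖1 + conj a * x‖ ^ 2 - ‖x + a‖ ^ 2 = (1 - ‖a‖ ^ 2) * (1 - ‖x‖ ^ 2) := by
  simp only [← normSq_eq_norm_sq, normSq_apply, add_re, add_im, mul_re, mul_im, conj_re, conj_im,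
    one_re, one_im]
  ring

lemma norm_add_lt_norm_one_add_conj_mul {a x : ℂ} (ha : ‖a‖ < 1) (hx : ‖x‖ < 1) :
    ‖x + a‖ < ‖1 + conj a * x‖ := by
  have key := sq_norm_one_add_conj_mul_sub_sq_norm_add a x
  have : 0 < (1 - ‖a‖ ^ 2) * (1 - ‖x‖ ^ 2) := by
    apply mul_pos <;> nlinarith [norm_nonneg a, norm_nonneg x]
  exact lt_of_pow_lt_pow_left₀ 2 (norm_nonneg _) (by linarith)

lemma one_add_conj_mul_ne_zero {a x : ℂ} (ha : ‖a‖ < 1) (hx : ‖x‖ < 1) :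
    1 + conj a * x ≠ 0 :=
  norm_pos_iff.mp ((norm_nonneg _).trans_lt (norm_add_lt_norm_one_add_conj_mul ha hx))

lemma discMobius_mapsTo_ball {a : ℂ} (ha : ‖a‖ < 1) :
    MapsTo (discMobius a) (ball 0 1) (ball 0 1) := by
  intro x hx
  rw [mem_ball_zero_iff] at hx ⊢
  have hlt := norm_add_lt_norm_one_add_conj_mul ha hx
  rw [discMobius, norm_div, div_lt_one ((norm_nonneg _).trans_lt hlt)]
  exact hlt

lemma hasDerivAt_discMobius {a x : ℂ} (hx : 1 + conj a * x ≠ 0) :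
    HasDerivAt (discMobius a) ((1 - (‖a‖ : ℂ) ^ 2) / (1 + conj a * x) ^ 2) x := by
  have hnum : HasDerivAt (fun y : ℂ => y + a) 1 x := (hasDerivAt_id x).add_const a
  have hden : HasDerivAt (fun y : ℂ => 1 + conj a * y) (conj a) x := by
    simpa using ((hasDerivAt_id x).const_mul (conj a)).const_add 1
  have hquot : (1 - (‖a‖ : ℂ) ^ 2) / (1 + conj a * x) ^ 2
      = (1 * (1 + conj a * x) - (x + a) * conj a) / (1 + conj a * x) ^ 2 := by
    rw [← mul_conj']; ring
  rw [hquot]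
  exact hnum.div hden hx

lemma differentiableOn_discMobius {a : ℂ} (ha : ‖a‖ < 1) :
    DifferentiableOn ℂ (discMobius a) (ball 0 1) := fun _ hx =>
  (hasDerivAt_discMobius (one_add_conj_mul_ne_zero ha (mem_ball_zero_iff.mp hx)))
    |>.differentiableAt.differentiableWithinAt

@[simp] lemma discMobius_zero_right (a : ℂ) : discMobius a 0 = a := by
  simp [discMobius]

@[simp] lemma discMobius_neg_self (a : ℂ) : discMobius (-a) a = 0 := by
  simp [discMobius]

lemma hasDerivAt_discMobius_zero (a : ℂ) :
    HasDerivAt (discMobius a) (1 - (‖a‖ : ℂ) ^ 2) 0 := by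
  simpa using hasDerivAt_discMobius (a := a) (x := 0) (by simp)

lemma hasDerivAt_discMobius_neg_self {a : ℂ} (ha : ‖a‖ < 1) :
    HasDerivAt (discMobius (-a)) (1 - (‖a‖ : ℂ) ^ 2)⁻¹ a := by
  have hne : (1 : ℂ) - (‖a‖ : ℂ) ^ 2 ≠ 0 := by
    norm_cast; nlinarith [norm_nonneg a]
  have hden : 1 + conj (-a) * a = 1 - (‖a‖ : ℂ) ^ 2 := by
    rw [map_neg, neg_mul, mul_comm, mul_conj']; ring
  convert hasDerivAt_discMobius (hden ▸ hne) using 1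
  rw [hden, norm_neg]
  field_simp

lemma norm_one_sub_sq_norm {a : ℂ} (ha : ‖a‖ ≤ 1) :
    ‖1 - (‖a‖ : ℂ) ^ 2‖ = 1 - ‖a‖ ^ 2 := by
  rw [← ofReal_one, ← ofReal_pow, ← ofReal_sub, Complex.norm_of_nonneg]
  nlinarith [norm_nonneg a]

theorem norm_deriv_mul_one_sub_sq_le_of_mapsTo_ball {w : ℂ → ℂ}
    (hd : DifferentiableOn ℂ w (ball 0 1)) (hw : MapsTo w (ball 0 1) (ball 0 1))
    {z : ℂ} (hz : z ∈ ball (0 : ℂ) 1) :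
    ‖deriv w z‖ * (1 - ‖z‖ ^ 2) ≤ 1 - ‖w z‖ ^ 2 := by
  have hz' : ‖z‖ < 1 := mem_ball_zero_iff.mp hz
  have hwz : ‖w z‖ < 1 := mem_ball_zero_iff.mp (hw hz)
  have hwz' : ‖-w z‖ < 1 := by rwa [norm_neg]
  -- `F` fixes `0` and maps the disc to itself, so the Schwarz lemma bounds `F' 0`.
  set F := discMobius (-w z) ∘ w ∘ discMobius z
  have hFd : DifferentiableOn ℂ F (ball 0 1) :=
    (differentiableOn_discMobius hwz').comp
      (hd.comp (differentiableOn_discMobius hz') (discMobius_mapsTo_ball hz'))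
      (hw.comp (discMobius_mapsTo_ball hz'))
  have hFm : MapsTo F (ball 0 1) (ball 0 1) :=
    (discMobius_mapsTo_ball hwz').comp (hw.comp (discMobius_mapsTo_ball hz'))
  have hF0 : F 0 = 0 := by simp [F]
  have hwd : HasDerivAt w (deriv w z) (discMobius z 0) := by
    rw [discMobius_zero_right]
    exact (hd.differentiableAt (isOpen_ball.mem_nhds hz)).hasDerivAt
  have hF' : HasDerivAt F
      ((1 - (‖w z‖ : ℂ) ^ 2)⁻¹ * (deriv w z * (1 - (‖z‖ : ℂ) ^ 2))) 0 :=
    (hasDerivAt_discMobius_neg_self hwz).comp_of_eq 0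
      (hwd.comp 0 (hasDerivAt_discMobius_zero z)) (by simp)
  have hle : ‖deriv F 0‖ ≤ 1 :=
    norm_deriv_le_one_of_mapsTo_ball hFd
      (by rw [hF0]; exact hFm.mono_right ball_subset_closedBall) one_pos
  rwa [hF'.deriv, norm_mul, norm_mul, norm_inv, norm_one_sub_sq_norm hwz.le,
    norm_one_sub_sq_norm hz'.le, inv_mul_le_iff₀ (by nlinarith [norm_nonneg (w z)]),
    mul_one] at hle

lemma sq_norm_add_one_sub_sq_norm_sub_one (v : ℂ) :
    ‖v + 1‖ ^ 2 - ‖v - 1‖ ^ 2 = 4 * v.re := by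
  simp only [← normSq_eq_norm_sq, normSq_apply, add_re, add_im, sub_re, sub_im, one_re, one_im]
  ring

lemma norm_sub_one_lt_norm_add_one {v : ℂ} (hv : 0 < v.re) : ‖v - 1‖ < ‖v + 1‖ :=
  lt_of_pow_lt_pow_left₀ 2 (norm_nonneg _) (by linarith [sq_norm_add_one_sub_sq_norm_sub_one v])

theorem norm_deriv_mul_one_sub_sq_le_of_re_pos {h : ℂ → ℂ}
    (hd : DifferentiableOn ℂ h (ball 0 1)) (hre : ∀ x ∈ ball (0 : ℂ) 1, 0 < (h x).re)
    {z : ℂ} (hz : z ∈ ball (0 : ℂ) 1) :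
    ‖deriv h z‖ * (1 - ‖z‖ ^ 2) ≤ 2 * (h z).re := by
  have hlt : ∀ x ∈ ball (0 : ℂ) 1, ‖h x - 1‖ < ‖h x + 1‖ := fun x hx =>
    norm_sub_one_lt_norm_add_one (hre x hx)
  have hne : ∀ x ∈ ball (0 : ℂ) 1, h x + 1 ≠ 0 := fun x hx =>
    norm_pos_iff.mp ((norm_nonneg _).trans_lt (hlt x hx))
  set w := fun x => (h x - 1) / (h x + 1)
  have hwd : DifferentiableOn ℂ w (ball 0 1) := (hd.sub_const 1).div (hd.add_const 1) hne
  have hwm : MapsTo w (ball 0 1) (ball 0 1) := fun x hx => by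
    rw [mem_ball_zero_iff, norm_div, div_lt_one ((norm_nonneg _).trans_lt (hlt x hx))]
    exact hlt x hx
  have hh : HasDerivAt h (deriv h z) z :=
    (hd.differentiableAt (isOpen_ball.mem_nhds hz)).hasDerivAt
  have hw' : deriv w z = 2 * deriv h z / (h z + 1) ^ 2 := by
    have hwder : HasDerivAt w _ z := (hh.sub_const 1).div (hh.add_const 1) (hne z hz)
    rw [hwder.deriv]
    ring
  have hwz : ‖w z‖ = ‖h z - 1‖ / ‖h z + 1‖ := norm_div _ _
  have hpick := norm_deriv_mul_one_sub_sq_le_of_mapsTo_ball hwd hwm hz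
  have hN : 0 < ‖h z + 1‖ ^ 2 := by positivity [hne z hz]
  rw [hw', hwz, norm_div, norm_mul, norm_pow, Complex.norm_two, div_pow, div_mul_eq_mul_div,
    one_sub_div hN.ne', div_le_div_iff_of_pos_right hN] at hpick
  linarith [sq_norm_add_one_sub_sq_norm_sub_one (h z)]

theorem norm_mul_logDeriv_le_of_re_pos {h : ℂ → ℂ}
    (hd : DifferentiableOn ℂ h (ball 0 1)) (hre : ∀ x ∈ ball (0 : ℂ) 1, 0 < (h x).re)
    {z : ℂ} (hz : z ∈ ball (0 : ℂ) 1) :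
    ‖z * logDeriv h z‖ ≤ 2 * ‖z‖ / (1 - ‖z‖ ^ 2) := by
  have hz' : ‖z‖ < 1 := mem_ball_zero_iff.mp hz
  have hcar := norm_deriv_mul_one_sub_sq_le_of_re_pos hd hre hz
  have hhz : 0 < ‖h z‖ := norm_pos_iff.mpr (ne_zero_of_re_pos (hre z hz))
  rw [logDeriv_apply, norm_mul, norm_div, mul_div_assoc',
    div_le_div_iff₀ hhz (by nlinarith [norm_nonneg z])]
  nlinarith [re_le_norm (h z), norm_nonneg z]

lemma mul_logDeriv_sub_one_eq {𝕜 : Type*} [NontriviallyNormedField 𝕜] {f p q : 𝕜 → 𝕜}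
    {z : 𝕜} (hz : z ≠ 0) (hp : DifferentiableAt 𝕜 p z) (hq : DifferentiableAt 𝕜 q z)
    (hpz : p z ≠ 0) (hqz : q z ≠ 0) (hf : f =ᶠ[𝓝 z] fun x => x * (p x * q x)) :
    z * logDeriv f z - 1 = z * logDeriv p z + z * logDeriv q z := by
  rw [(logDeriv_congr_nhds hf).eq_of_nhds,
    logDeriv_mul (f := fun x => x) (g := fun x => p x * q x) z hz (mul_ne_zero hpz hqz)
      differentiableAt_fun_id (hp.mul hq),
    logDeriv_mul z hpz hqz hp hq, logDeriv_id']
  field_simp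
  ring

lemma eq_mul_dslope_zero {𝕜 : Type*} [NontriviallyNormedField 𝕜] {f : 𝕜 → 𝕜} (hf0 : f 0 = 0)
    (x : 𝕜) : f x = x * dslope f 0 x := by
  simpa using (sub_smul_dslope_of_zero hf0 x).symm

lemma dslope_zero_eq_div {𝕜 : Type*} [NontriviallyNormedField 𝕜] {f : 𝕜 → 𝕜} (hf0 : f 0 = 0)
    {x : 𝕜} (hx : x ≠ 0) :
    dslope f 0 x = f x / x := by
  rw [eq_div_iff hx, mul_comm, ← eq_mul_dslope_zero hf0]

lemma re_dslope_zero_pos {g : ℂ → ℂ} {s : Set ℂ} (hg0 : g 0 = 0) (hg0' : 0 < (deriv g 0).re)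
    (hgz : ∀ z ∈ s, z ≠ 0 → 0 < (g z / z).re) : ∀ z ∈ s, 0 < (dslope g 0 z).re := by
  intro z hz
  rcases eq_or_ne z 0 with rfl | hz0
  · rwa [dslope_same]
  · rw [dslope_zero_eq_div hg0 hz0]
    exact hgz z hz hz0

lemma re_dslope_zero_div_dslope_zero_pos {f g : ℂ → ℂ} {s : Set ℂ} (hf0 : f 0 = 0)
    (hg0 : g 0 = 0) (h0 : 0 < (deriv f 0 / deriv g 0).re)
    (hfg : ∀ z ∈ s, z ≠ 0 → 0 < (f z / g z).re) :
    ∀ z ∈ s, 0 < (dslope f 0 z / dslope g 0 z).re := by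
  intro z hz
  rcases eq_or_ne z 0 with rfl | hz0
  · rwa [dslope_same, dslope_same]
  · rw [dslope_zero_eq_div hf0 hz0, dslope_zero_eq_div hg0 hz0, div_div_div_cancel_right₀ hz0]
    exact hfg z hz hz0

theorem F1_log_deriv_bound_general
    (f g : ℂ → ℂ)
    (hf : DifferentiableOn ℂ f (ball (0 : ℂ) 1))
    (hg : DifferentiableOn ℂ g (ball (0 : ℂ) 1))
    (hf0 : f 0 = 0) (hg0 : g 0 = 0)
    (hf0' : deriv f 0 = 1) (hg0' : deriv g 0 = 1)
    (hfg : ∀ z ∈ ball (0 : ℂ) 1, z ≠ 0 → 0 < (f z / g z).re)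
    (hgz : ∀ z ∈ ball (0 : ℂ) 1, z ≠ 0 → 0 < (g z / z).re)
    (z : ℂ) (hzball : z ∈ ball (0 : ℂ) 1) (hz0 : z ≠ 0)
    (r : ℝ) (hr : ‖z‖ = r) :
    ‖z * deriv f z / f z - 1‖ ≤ 4 * r / (1 - r ^ 2) := by
  have hball : ball (0 : ℂ) 1 ∈ 𝓝 0 := ball_mem_nhds 0 one_pos
  have hzn : ball (0 : ℂ) 1 ∈ 𝓝 z := isOpen_ball.mem_nhds hzball
  -- `f = z · p · q` with `q = g / z` and `p = f / g`, both of positive real part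
  set q := dslope g 0
  set p := fun x => dslope f 0 x / q x
  have hq_re := re_dslope_zero_pos hg0 (by simp [hg0']) hgz
  have hp_re := re_dslope_zero_div_dslope_zero_pos hf0 hg0 (by simp [hf0', hg0']) hfg
  have hq_ne : ∀ x ∈ ball (0 : ℂ) 1, q x ≠ 0 := fun x hx => ne_zero_of_re_pos (hq_re x hx)
  have hqd : DifferentiableOn ℂ q (ball 0 1) := (differentiableOn_dslope hball).2 hg
  have hpd : DifferentiableOn ℂ p (ball 0 1) :=
    ((differentiableOn_dslope hball).2 hf).div hqd hq_ne
  have hfpq : f =ᶠ[𝓝 z] fun x => x * (p x * q x) := by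
    filter_upwards [hzn] with x hx
    rw [div_mul_cancel₀ _ (hq_ne x hx)]
    exact eq_mul_dslope_zero hf0 x
  rw [mul_div_assoc, ← logDeriv_apply, mul_logDeriv_sub_one_eq hz0 (hpd.differentiableAt hzn)
    (hqd.differentiableAt hzn) (ne_zero_of_re_pos (hp_re z hzball)) (hq_ne z hzball) hfpq, ← hr]
  calc ‖z * logDeriv p z + z * logDeriv q z‖
      ≤ ‖z * logDeriv p z‖ + ‖z * logDeriv q z‖ := norm_add_le _ _
    _ ≤ 2 * ‖z‖ / (1 - ‖z‖ ^ 2) + 2 * ‖z‖ / (1 - ‖z‖ ^ 2) :=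
        add_le_add (norm_mul_logDeriv_le_of_re_pos hpd hp_re hzball)
          (norm_mul_logDeriv_le_of_re_pos hqd hq_re hzball)
    _ = 4 * ‖z‖ / (1 - ‖z‖ ^ 2) := by ring

theorem F1_log_deriv_bound
    (f g : ℂ → ℂ)
    (hf : DifferentiableOn ℂ f (ball (0 : ℂ) 1))
    (hg : DifferentiableOn ℂ g (ball (0 : ℂ) 1))
    (hf0 : f 0 = 0) (hg0 : g 0 = 0)
    (hf0' : deriv f 0 = 1) (hg0' : deriv g 0 = 1)
    (hfne : ∀ z ∈ ball (0 : ℂ) 1, z ≠ 0 → f z ≠ 0)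
    (hgne : ∀ z ∈ ball (0 : ℂ) 1, z ≠ 0 → g z ≠ 0)
    (hfg : ∀ z ∈ ball (0 : ℂ) 1, z ≠ 0 → 0 < (f z / g z).re)
    (hgz : ∀ z ∈ ball (0 : ℂ) 1, z ≠ 0 → 0 < (g z / z).re)
    (z : ℂ) (hzball : z ∈ ball (0 : ℂ) 1) (hz0 : z ≠ 0)
    (r : ℝ) (hr : ‖z‖ = r) :
    ‖z * deriv f z / f z - 1‖ ≤ 4 * r / (1 - r ^ 2) :=
  F1_log_deriv_bound_general f g hf hg hf0 hg0 hf0' hg0' hfg hgz z hzball hz0 r hr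
end

section
/- For β > 1, let R = (β−1)/(2 + √(4 + (β−1)²)). Then R ∈ (0,1), R is a root of (1−β) + 4r − (1−β)r² = 0, and for all r ∈ [0, R], 1 + 4r/(1−r²) ≤ β. -/
/-!
With `a = β - 1 > 0`, the condition `1 + 4r/(1 - r²) ≤ β` on `0 ≤ r < 1` is `a r² + 4 r - a ≤ 0`.
This quadratic is increasing on `[0, ∞)`, so it holds exactly up to its positive root
`(√(4 + a²) - 2) / a = a / (2 + √(4 + a²))`, and that root is below `1` because `a < 2 + √(4 + a²)`.
-/

open Real Set

/-- The positive root of `a r² + 4 r - a` for `a > 0`, written so that no division by `a` occurs. -/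
noncomputable def positiveRoot (a : ℝ) : ℝ := a / (2 + √(4 + a ^ 2))

lemma two_add_sqrt_four_add_sq_pos (a : ℝ) : 0 < 2 + √(4 + a ^ 2) := by positivity

lemma positiveRoot_pos {a : ℝ} (ha : 0 < a) : 0 < positiveRoot a :=
  div_pos ha (two_add_sqrt_four_add_sq_pos a)

lemma positiveRoot_lt_one (a : ℝ) : positiveRoot a < 1 := by
  rw [positiveRoot, div_lt_one (two_add_sqrt_four_add_sq_pos a)]
  have : |a| ≤ √(4 + a ^ 2) := Real.abs_le_sqrt (by linarith)
  linarith [le_abs_self a]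

lemma positiveRoot_isRoot (a : ℝ) :
    a * positiveRoot a ^ 2 + 4 * positiveRoot a - a = 0 := by
  have hsq : √(4 + a ^ 2) ^ 2 = 4 + a ^ 2 := Real.sq_sqrt (by positivity)
  have hden := (two_add_sqrt_four_add_sq_pos a).ne'
  rw [positiveRoot]
  field_simp
  linear_combination (-a) * hsq

lemma quadratic_nonpos_of_le_root {a ρ r : ℝ} (ha : 0 ≤ a) (hρ : a * ρ ^ 2 + 4 * ρ - a = 0)
    (hr₀ : 0 ≤ r) (hrρ : r ≤ ρ) : a * r ^ 2 + 4 * r - a ≤ 0 := by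
  have hsq : r ^ 2 ≤ ρ ^ 2 := pow_le_pow_left₀ hr₀ hrρ 2
  nlinarith [mul_le_mul_of_nonneg_left hsq ha]

lemma four_mul_div_one_sub_sq_le {a r : ℝ} (hr₀ : 0 ≤ r) (hr₁ : r < 1)
    (hq : a * r ^ 2 + 4 * r - a ≤ 0) : 4 * r / (1 - r ^ 2) ≤ a := by
  have hpos : 0 < 1 - r ^ 2 := by nlinarith
  rw [div_le_iff₀ hpos]
  linarith

theorem F1_Mbeta_radius_computation (β : ℝ) (hβ : 1 < β) :
    let R : ℝ := (β - 1) / (2 + Real.sqrt (4 + (β - 1) ^ 2))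
    (0 < R ∧ R < 1) ∧
    (1 - β) + 4 * R - (1 - β) * R ^ 2 = 0 ∧
    (∀ r ∈ Icc (0 : ℝ) R, 1 + 4 * r / (1 - r ^ 2) ≤ β) := by
  intro R
  have ha : 0 < β - 1 := sub_pos.2 hβ
  have hroot : (β - 1) * R ^ 2 + 4 * R - (β - 1) = 0 := positiveRoot_isRoot _
  refine ⟨⟨positiveRoot_pos ha, positiveRoot_lt_one _⟩, by linear_combination hroot, ?_⟩
  rintro r ⟨hr₀, hrR⟩
  have := four_mul_div_one_sub_sq_le hr₀ (hrR.trans_lt (positiveRoot_lt_one _))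
    (quadratic_nonpos_of_le_root ha.le hroot hr₀ hrR)
  linarith
end
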